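/- Let σ > 0, let m^V, m^W ∈ ℝ^N and let Σ^V, Σ^W be symmetric positive semidefinite N×N real matrices. Set Σ̂ = 2σ²I + Σ^V + Σ^W and Z(V,W) = det(I + (1/σ²)Σ^V)^{1/4} · det(I + (1/σ²)Σ^W)^{1/4} / det(I + (1/(2σ²))(Σ^V + Σ^W))^{1/2}. Then the normalized L² scalar product of the regularized Gaussian densities satisfies ⟨N(m^V, Σ^V + σ²I), N(m^W, Σ^W + σ²I)⟩ / (‖N(m^V, Σ^V + σ²I)‖_{L²} · ‖N(m^W, Σ^W + σ²I)‖_{L²}) = Z(V,W) · exp(-½ (m^V - m^W)^T Σ̂^{-1} (m^V - m^W)). -/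

import Mathlib

/-!
Completing the square in the exponent turns the product of two Gaussian densities into a
constant times a third Gaussian, whence `∫ N(m₁, A) N(m₂, B) = N(m₂, A + B)(m₁)`. With
`m₁ = m₂`, `A = B` this also gives the `L²` norms, and the determinant factors of the
normalised product combine into `det A ^ ¼ det B ^ ¼ / det ((A + B) / 2) ^ ½`, which is
unchanged when `A` and `B` are scaled by `σ⁻²`.
-/

open Matrix MeasureTheory

/-- The Gaussian density `N(m,Σ)(w) = (2π)^{-k/2} det(Σ)^{-1/2} exp(-½ (w-m)ᵀ Σ⁻¹ (w-m))`
on `ℝ^k`. -/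
noncomputable def gaussPDF {k : ℕ} (m : Fin k → ℝ) (S : Matrix (Fin k) (Fin k) ℝ)
    (w : Fin k → ℝ) : ℝ :=
  (2 * Real.pi) ^ (-(k : ℝ) / 2) * S.det ^ (-(1 : ℝ) / 2) *
    Real.exp (-(1 / 2) * ((w - m) ⬝ᵥ (S⁻¹ *ᵥ (w - m))))

section GaussianIntegral

variable {ι : Type*} [Fintype ι]

theorem integral_exp_neg_half_dotProduct_self :
    ∫ x : ι → ℝ, Real.exp (-(1 / 2) * (x ⬝ᵥ x)) = (2 * Real.pi) ^ ((Fintype.card ι : ℝ) / 2) := by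
  have h1d : ∫ t : ℝ, Real.exp (-(1 / 2) * t ^ 2) = (2 * Real.pi) ^ ((1 : ℝ) / 2) := by
    rw [integral_gaussian, ← Real.sqrt_eq_rpow]
    norm_num [div_eq_mul_inv, mul_comm]
  have hprod (x : ι → ℝ) :
      Real.exp (-(1 / 2) * (x ⬝ᵥ x)) = ∏ i, Real.exp (-(1 / 2) * x i ^ 2) := by
    simp only [← Real.exp_sum, dotProduct, Finset.mul_sum, sq]
  simp_rw [hprod]
  rw [integral_fintype_prod_volume_eq_pow (fun t => Real.exp (-(1 / 2) * t ^ 2)), h1d,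
    ← Real.rpow_natCast, ← Real.rpow_mul (by positivity)]
  ring_nf

variable [DecidableEq ι]

theorem integral_comp_mulVec {E : Type*} [NormedAddCommGroup E] [NormedSpace ℝ E]
    {M : Matrix ι ι ℝ} (hM : M.det ≠ 0) (f : (ι → ℝ) → E) :
    ∫ x, f (M *ᵥ x) = |M.det|⁻¹ • ∫ y, f y := by
  have hemb : MeasurableEmbedding (toLin' M) :=
    ((toLin' M).equivOfDetNeZero (by rwa [LinearMap.det_toLin'])).toContinuousLinearEquiv
      |>.toHomeomorph.measurableEmbedding
  calc ∫ x, f (M *ᵥ x) = ∫ y, f y ∂(Measure.map (toLin' M) volume) :=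
        (hemb.integral_map f).symm
    _ = |M.det|⁻¹ • ∫ y, f y := by
      rw [Real.map_matrix_volume_pi_eq_smul_volume_pi hM, integral_smul_measure,
        ENNReal.toReal_ofReal (by positivity), abs_inv]

open scoped MatrixOrder in
theorem Matrix.PosDef.integral_exp_neg_half_dotProduct_mulVec {M : Matrix ι ι ℝ}
    (hM : M.PosDef) (c : ι → ℝ) :
    ∫ x, Real.exp (-(1 / 2) * ((x - c) ⬝ᵥ (M *ᵥ (x - c)))) =
      (2 * Real.pi) ^ ((Fintype.card ι : ℝ) / 2) * M.det ^ (-(1 : ℝ) / 2) := by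
  rw [integral_sub_right_eq_self (fun x => Real.exp (-(1 / 2) * (x ⬝ᵥ (M *ᵥ x)))) c]
  set S := CFC.sqrt M
  have hS : S.PosSemidef := (CFC.sqrt_nonneg M).posSemidef
  have hdetS : S.det = √M.det := by
    simpa [RCLike.sqrt_eq_ite] using hM.posSemidef.det_sqrt
  have hquad (x : ι → ℝ) : x ⬝ᵥ (M *ᵥ x) = (S *ᵥ x) ⬝ᵥ (S *ᵥ x) := by
    rw [← CFC.sqrt_mul_sqrt_self M hM.posSemidef.nonneg, ← mulVec_mulVec, dotProduct_mulVec,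
      ← mulVec_transpose, (isHermitian_iff_isSymm.1 hS.isHermitian).eq]
  simp_rw [hquad]
  rw [integral_comp_mulVec (f := fun y => Real.exp (-(1 / 2) * (y ⬝ᵥ y)))
      (by rw [hdetS]; exact (Real.sqrt_pos.2 hM.det_pos).ne'),
    integral_exp_neg_half_dotProduct_self, hdetS, abs_of_nonneg (Real.sqrt_nonneg _),
    Real.sqrt_eq_rpow, ← Real.rpow_neg hM.det_pos.le, smul_eq_mul, mul_comm]
  norm_num

end GaussianIntegral

section CompletingTheSquare

variable {ι K : Type*} [Fintype ι] [CommRing K]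

theorem Matrix.IsSymm.dotProduct_mulVec_comm {S : Matrix ι ι K} (hS : S.IsSymm) (a b : ι → K) :
    a ⬝ᵥ (S *ᵥ b) = b ⬝ᵥ (S *ᵥ a) := by
  rw [dotProduct_mulVec, ← mulVec_transpose, hS.eq, dotProduct_comm]

variable [DecidableEq ι]

theorem Matrix.inv_sub_inv_mul_inv_add_inv_mul_inv {A B : Matrix ι ι K} (hA : IsUnit A.det)
    (hB : IsUnit B.det) (hAB : IsUnit (A + B).det) :
    A⁻¹ - A⁻¹ * (A⁻¹ + B⁻¹)⁻¹ * A⁻¹ = (A + B)⁻¹ := by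
  rw [inv_add_inv (by simp [(isUnit_iff_isUnit_det A).2 hA, (isUnit_iff_isUnit_det B).2 hB]),
    mul_inv_rev, mul_inv_rev, nonsing_inv_nonsing_inv _ hA, nonsing_inv_nonsing_inv _ hB,
    Matrix.mul_assoc, Matrix.mul_assoc, Matrix.mul_assoc, mul_nonsing_inv _ hA, Matrix.mul_one]
  calc A⁻¹ - A⁻¹ * (B * (A + B)⁻¹) = A⁻¹ * ((A + B) - B) * (A + B)⁻¹ := by
        rw [Matrix.mul_sub, Matrix.sub_mul, mul_nonsing_inv_cancel_right _ _ hAB,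
          Matrix.mul_assoc]
    _ = (A + B)⁻¹ := by
        rw [add_sub_cancel_right, nonsing_inv_mul _ hA, Matrix.one_mul]

theorem Matrix.det_inv_add_inv {F : Type*} [Field F] {A B : Matrix ι ι F} (hA : A.det ≠ 0)
    (hB : B.det ≠ 0) : (A⁻¹ + B⁻¹).det = (A + B).det / (A.det * B.det) := by
  rw [inv_add_inv (by simp [(isUnit_iff_isUnit_det A).2 hA.isUnit,
      (isUnit_iff_isUnit_det B).2 hB.isUnit]),
    det_mul, det_mul, det_nonsing_inv, det_nonsing_inv]
  simp only [Ring.inverse_eq_inv']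
  field_simp

theorem dotProduct_sub_mulVec_sub_add_dotProduct_mulVec {P R : Matrix ι ι K} (hP : P.IsSymm)
    (hR : R.IsSymm) (hPR : IsUnit (P + R).det) (y d : ι → K) :
    (y - d) ⬝ᵥ (P *ᵥ (y - d)) + y ⬝ᵥ (R *ᵥ y) =
      (y - (P + R)⁻¹ *ᵥ P *ᵥ d) ⬝ᵥ ((P + R) *ᵥ (y - (P + R)⁻¹ *ᵥ P *ᵥ d)) +
        d ⬝ᵥ ((P - P * (P + R)⁻¹ * P) *ᵥ d) := by
  set M := P + R
  set c := M⁻¹ *ᵥ P *ᵥ d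
  have hMc : M *ᵥ c = P *ᵥ d := by
    simp only [c, mulVec_mulVec, mul_nonsing_inv_cancel_left _ _ hPR]
  have hcPd : c ⬝ᵥ (P *ᵥ d) = d ⬝ᵥ ((P * M⁻¹ * P) *ᵥ d) := by
    rw [← mulVec_mulVec, ← mulVec_mulVec, hP.dotProduct_mulVec_comm d]
  have hyMc := (hP.add hR).dotProduct_mulVec_comm y c
  simp only [mulVec_sub, dotProduct_sub, sub_dotProduct, sub_mulVec] at hyMc ⊢
  rw [hMc] at hyMc ⊢
  simp only [M, add_mulVec, dotProduct_add] at hyMc ⊢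
  rw [← hyMc, hcPd, hP.dotProduct_mulVec_comm y d]
  ring

end CompletingTheSquare

section DetAffinity

variable {n : Type*} [Fintype n] [DecidableEq n]

/-- `Z(V, W) = detAffinity (1 + σ⁻² Σᵛ) (1 + σ⁻² Σʷ)`. -/
noncomputable def detAffinity (A B : Matrix n n ℝ) : ℝ :=
  A.det ^ ((1 : ℝ) / 4) * B.det ^ ((1 : ℝ) / 4) / ((2 : ℝ)⁻¹ • (A + B)).det ^ ((1 : ℝ) / 2)

theorem detAffinity_smul {A B : Matrix n n ℝ} (hA : A.PosSemidef) (hB : B.PosSemidef) {t : ℝ}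
    (ht : 0 < t) : detAffinity (t • A) (t • B) = detAffinity A B := by
  have hdet (M : Matrix n n ℝ) (hM : M.PosSemidef) (r : ℝ) :
      (t • M).det ^ r = (t ^ Fintype.card n) ^ r * M.det ^ r := by
    rw [det_smul, Real.mul_rpow (by positivity) hM.det_nonneg]
  have hquarter : (t ^ Fintype.card n) ^ ((1 : ℝ) / 4) * (t ^ Fintype.card n) ^ ((1 : ℝ) / 4) =
      (t ^ Fintype.card n) ^ ((1 : ℝ) / 2) := by
    rw [← Real.rpow_add (by positivity)]
    norm_num
  unfold detAffinity
  rw [← smul_add, smul_comm, hdet A hA, hdet B hB, hdet _ ((hA.add hB).smul (by norm_num)),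
    mul_mul_mul_comm, hquarter, mul_div_mul_left _ _ (by positivity)]

end DetAffinity

section GaussPDF

variable {k : ℕ}

theorem integral_gaussPDF_mul_gaussPDF (m₁ m₂ : Fin k → ℝ) {A B : Matrix (Fin k) (Fin k) ℝ}
    (hA : A.PosDef) (hB : B.PosDef) :
    ∫ x, gaussPDF m₁ A x * gaussPDF m₂ B x = gaussPDF m₂ (A + B) m₁ := by
  have hAu : IsUnit A.det := hA.det_pos.ne'.isUnit
  have hBu : IsUnit B.det := hB.det_pos.ne'.isUnit
  have hM : (A⁻¹ + B⁻¹).PosDef := hA.inv.add hB.inv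
  set c := (A⁻¹ + B⁻¹)⁻¹ *ᵥ A⁻¹ *ᵥ (m₁ - m₂)
  set E := Real.exp (-(1 / 2) * ((m₁ - m₂) ⬝ᵥ ((A + B)⁻¹ *ᵥ (m₁ - m₂))))
  have hpt (y : Fin k → ℝ) : gaussPDF m₁ A (y + m₂) * gaussPDF m₂ B (y + m₂) =
      (2 * Real.pi) ^ (-(k : ℝ) / 2) * A.det ^ (-(1 : ℝ) / 2) *
        ((2 * Real.pi) ^ (-(k : ℝ) / 2) * B.det ^ (-(1 : ℝ) / 2)) * E *
        Real.exp (-(1 / 2) * ((y - c) ⬝ᵥ ((A⁻¹ + B⁻¹) *ᵥ (y - c)))) := by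
    have hsq := dotProduct_sub_mulVec_sub_add_dotProduct_mulVec
      (isHermitian_iff_isSymm.1 hA.inv.isHermitian)
      (isHermitian_iff_isSymm.1 hB.inv.isHermitian) hM.det_pos.ne'.isUnit y (m₁ - m₂)
    rw [inv_sub_inv_mul_inv_add_inv_mul_inv hAu hBu (hA.add hB).det_pos.ne'.isUnit] at hsq
    have hy₁ : y + m₂ - m₁ = y - (m₁ - m₂) := by abel
    simp only [gaussPDF, hy₁, add_sub_cancel_right, E]
    rw [mul_mul_mul_comm, mul_assoc _ (Real.exp _), ← Real.exp_add, ← Real.exp_add, ← mul_add,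
      ← mul_add, hsq, add_comm]
  rw [← integral_add_right_eq_self _ m₂]
  simp_rw [hpt]
  rw [integral_const_mul, hM.integral_exp_neg_half_dotProduct_mulVec, gaussPDF,
    det_inv_add_inv hA.det_pos.ne' hB.det_pos.ne']
  have hp : 0 < 2 * Real.pi := by positivity
  have ha := hA.det_pos
  have hb := hB.det_pos
  have hs := (hA.add hB).det_pos
  rw [Fintype.card_fin, Real.div_rpow hs.le (by positivity), Real.mul_rpow ha.le hb.le]
  simp only [neg_div, Real.rpow_neg hp.le, Real.rpow_neg ha.le, Real.rpow_neg hb.le,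
    Real.rpow_neg hs.le, E]
  field_simp

theorem integral_gaussPDF_sq (m : Fin k → ℝ) {A : Matrix (Fin k) (Fin k) ℝ} (hA : A.PosDef) :
    ∫ x, gaussPDF m A x ^ 2 =
      (2 * Real.pi) ^ (-(k : ℝ) / 2) * ((2 : ℝ) • A).det ^ (-(1 : ℝ) / 2) := by
  simpa [sq, gaussPDF, two_smul] using integral_gaussPDF_mul_gaussPDF m m hA hA

theorem integral_gaussPDF_mul_div_sqrt (m₁ m₂ : Fin k → ℝ) {A B : Matrix (Fin k) (Fin k) ℝ}
    (hA : A.PosDef) (hB : B.PosDef) :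
    (∫ x, gaussPDF m₁ A x * gaussPDF m₂ B x) /
        ((∫ x, gaussPDF m₁ A x ^ 2) ^ ((1 : ℝ) / 2) *
          (∫ x, gaussPDF m₂ B x ^ 2) ^ ((1 : ℝ) / 2)) =
      detAffinity A B * Real.exp (-(1 / 2) * ((m₁ - m₂) ⬝ᵥ ((A + B)⁻¹ *ᵥ (m₁ - m₂)))) := by
  rw [integral_gaussPDF_mul_gaussPDF m₁ m₂ hA hB, integral_gaussPDF_sq m₁ hA,
    integral_gaussPDF_sq m₂ hB, ← detAffinity_smul hA.posSemidef hB.posSemidef two_pos,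
    detAffinity, ← smul_add, smul_smul, inv_mul_cancel₀ two_ne_zero, one_smul, gaussPDF]
  set p := (2 * Real.pi) ^ (-(k : ℝ) / 2)
  have hp : 0 < p := by positivity
  have hroot (x : ℝ) (hx : 0 < x) :
      (p * x ^ (-(1 : ℝ) / 2)) ^ ((1 : ℝ) / 2) = √p / x ^ ((1 : ℝ) / 4) := by
    rw [Real.mul_rpow hp.le (by positivity), ← Real.rpow_mul hx.le, ← Real.sqrt_eq_rpow,
      show -(1 : ℝ) / 2 * (1 / 2) = -(1 / 4) by norm_num, Real.rpow_neg hx.le, div_eq_mul_inv √p]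
  have hs := (hA.add hB).det_pos
  rw [hroot _ (hA.smul (two_pos : (0 : ℝ) < 2)).det_pos,
    hroot _ (hB.smul (two_pos : (0 : ℝ) < 2)).det_pos, neg_div, Real.rpow_neg hs.le]
  field_simp
  rw [Real.sq_sqrt hp.le]

end GaussPDF

/-- The genRBF kernel formula: the normalized L² scalar product of the regularized
Gaussian densities `N(mᵛ, Σᵛ + σ²I)` and `N(mʷ, Σʷ + σ²I)` equals
`Z(V,W) exp(-½ ‖mᵛ - mʷ‖²_Σ̂)` with `Σ̂ = 2σ²I + Σᵛ + Σʷ`. -/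
theorem genRBF_kernel_formula {N : ℕ}
    (σ : ℝ) (hσ : 0 < σ)
    (mV mW : Fin N → ℝ)
    (SV SW : Matrix (Fin N) (Fin N) ℝ)
    (hV : SV.PosSemidef) (hW : SW.PosSemidef)
    (Shat : Matrix (Fin N) (Fin N) ℝ)
    (hShat : Shat = (2 * σ ^ 2) • (1 : Matrix (Fin N) (Fin N) ℝ) + SV + SW)
    (Z : ℝ)
    (hZ : Z = (1 + (σ ^ 2)⁻¹ • SV).det ^ ((1 : ℝ) / 4) *
        (1 + (σ ^ 2)⁻¹ • SW).det ^ ((1 : ℝ) / 4) /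
        (1 + (2 * σ ^ 2)⁻¹ • (SV + SW)).det ^ ((1 : ℝ) / 2)) :
    (∫ x, gaussPDF mV (SV + σ ^ 2 • 1) x * gaussPDF mW (SW + σ ^ 2 • 1) x) /
        ((∫ x, (gaussPDF mV (SV + σ ^ 2 • 1) x) ^ 2) ^ ((1 : ℝ) / 2) *
          (∫ x, (gaussPDF mW (SW + σ ^ 2 • 1) x) ^ 2) ^ ((1 : ℝ) / 2)) =
      Z * Real.exp (-(1 / 2) * ((mV - mW) ⬝ᵥ (Shat⁻¹ *ᵥ (mV - mW)))) := by
  have hσ2 : σ ^ 2 ≠ 0 := by positivity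
  have hreg (S : Matrix (Fin N) (Fin N) ℝ) (hS : S.PosSemidef) : (S + σ ^ 2 • 1).PosDef :=
    PosDef.posSemidef_add hS (PosDef.one.smul (by positivity))
  have hunscale (S : Matrix (Fin N) (Fin N) ℝ) :
      1 + (σ ^ 2)⁻¹ • S = (σ ^ 2)⁻¹ • (S + σ ^ 2 • 1) := by
    rw [smul_add, smul_smul, inv_mul_cancel₀ hσ2, one_smul, add_comm]
  have hZ' : Z = detAffinity (1 + (σ ^ 2)⁻¹ • SV) (1 + (σ ^ 2)⁻¹ • SW) := by
    rw [hZ, detAffinity]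
    congr 3
    module
  have hsum : (SV + σ ^ 2 • 1) + (SW + σ ^ 2 • 1) = Shat := by
    rw [hShat]
    module
  rw [integral_gaussPDF_mul_div_sqrt mV mW (hreg SV hV) (hreg SW hW), hZ', hunscale, hunscale,
    detAffinity_smul (hreg SV hV).posSemidef (hreg SW hW).posSemidef (by positivity), hsum]
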